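/- arXiv:math/9903126 — 4 statements merged into one kernel-verified Lean document; each statement's English description precedes it below -/
import Mathlib

section
/- For the function f : ℝ² → ℝ defined by f(x,t) = ((1+t²)² + x²)^{-1/4}, both sides of the Grushin Sobolev inequality are finite and equality holds: (∫_{ℝ²} |f(x,t)|⁶ dx dt)^{1/3} = π^{-2/3} · ∫_{ℝ²} [ (∂f/∂t)(x,t)² + 4 t² (∂f/∂x)(x,t)² ] dx dt. -/
/-!
With `D = (1 + t²)² + x²` one has `|f|⁶ = D^(-3/2)`, and differentiating `f = D^(-1/4)` gives
`(∂ₜf)² + 4t²(∂ₓf)² = t² D^(-3/2)`. Integrating first in `x`, `∫ (b² + x²)^(-3/2) dx = 2/b²`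
with `b = 1 + t²`, so both sides reduce to one-variable integrals,
`∫ 2/(1+t²)² dt = π` and `∫ 2t²/(1+t²)² dt = π` (antiderivatives `arctan t ± t/(1+t²)`),
and the claim becomes `π^(1/3) = π^(-2/3) · π`. Each one-variable integrand is the nonnegative
derivative of an odd function with a limit at `+∞`, which gives its integrability as well.
-/

open MeasureTheory Real Filter Topology Set

theorem Function.Odd.tendsto_atBot {g : ℝ → ℝ} {l : ℝ} (hg : Function.Odd g)
    (h : Tendsto g atTop (𝓝 l)) : Tendsto g atBot (𝓝 (-l)) :=
  (h.comp tendsto_neg_atBot_atTop).neg.congr fun x => by simp [hg x]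

theorem integrable_deriv_of_nonneg_of_tendsto {g g' : ℝ → ℝ} {m n : ℝ}
    (hd : ∀ x, HasDerivAt g (g' x) x) (hg' : ∀ x, 0 ≤ g' x)
    (hbot : Tendsto g atBot (𝓝 m)) (htop : Tendsto g atTop (𝓝 n)) : Integrable g' := by
  have hint : ∀ a b, IntervalIntegrable g' volume a b := fun a b =>
    intervalIntegral.intervalIntegrable_deriv_of_nonneg
      (fun x _ => (hd x).continuousAt.continuousWithinAt) (fun x _ => hd x) fun x _ => hg' x
  refine integrable_of_intervalIntegral_norm_tendsto (n - m)
    (fun x => (hint (-x) x).1) tendsto_neg_atTop_atBot tendsto_id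
    ((htop.sub (hbot.comp tendsto_neg_atTop_atBot)).congr fun x => ?_)
  simp only [Real.norm_of_nonneg (hg' _)]
  rw [intervalIntegral.integral_eq_sub_of_hasDerivAt (fun y _ => hd y) (hint _ _)]
  rfl

theorem Function.Odd.integrable_and_integral_deriv_eq_two_mul {g g' : ℝ → ℝ} {l : ℝ}
    (hodd : Function.Odd g) (hd : ∀ x, HasDerivAt g (g' x) x) (hg' : ∀ x, 0 ≤ g' x)
    (htop : Tendsto g atTop (𝓝 l)) :
    Integrable g' ∧ ∫ x, g' x = 2 * l := by
  have hbot := hodd.tendsto_atBot htop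
  have hint := integrable_deriv_of_nonneg_of_tendsto hd hg' hbot htop
  exact ⟨hint, by rw [integral_of_hasDerivAt_of_tendsto hd hint hbot htop]; ring⟩

theorem rpow_neg_three_halves_eq_inv_sqrt_pow {y : ℝ} (hy : 0 ≤ y) :
    y ^ (-(3 : ℝ) / 2) = (√y ^ 3)⁻¹ := by
  rw [sqrt_eq_rpow, ← rpow_natCast, ← rpow_mul hy, ← rpow_neg hy]
  norm_num

theorem hasDerivAt_div_mul_sqrt_sq_add_sq {b : ℝ} (hb : b ≠ 0) (x : ℝ) :
    HasDerivAt (fun x => x / (b ^ 2 * √(b ^ 2 + x ^ 2))) ((b ^ 2 + x ^ 2) ^ (-(3 : ℝ) / 2)) x := by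
  have hpos : 0 < b ^ 2 + x ^ 2 := by positivity
  have hsq : √(b ^ 2 + x ^ 2) ^ 2 = b ^ 2 + x ^ 2 := sq_sqrt hpos.le
  have hden := (((hasDerivAt_pow 2 x).const_add (b ^ 2)).sqrt hpos.ne').const_mul (b ^ 2)
  refine ((hasDerivAt_id x).div hden (by positivity)).congr_deriv ?_
  rw [rpow_neg_three_halves_eq_inv_sqrt_pow hpos.le]
  field_simp
  simp only [id, Nat.cast_ofNat, Nat.add_one_sub_one, pow_one]
  linear_combination 2 * hsq

theorem tendsto_div_mul_sqrt_sq_add_sq {b : ℝ} (hb : b ≠ 0) :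
    Tendsto (fun x => x / (b ^ 2 * √(b ^ 2 + x ^ 2))) atTop (𝓝 (1 / b ^ 2)) := by
  have hlim : Tendsto (fun x : ℝ => b ^ 2 * √(b ^ 2 / x ^ 2 + 1)) atTop (𝓝 (b ^ 2 * √(0 + 1))) :=
    (((tendsto_const_nhds.div_atTop (tendsto_pow_atTop two_ne_zero)).add
      tendsto_const_nhds).sqrt).const_mul _
  rw [zero_add, sqrt_one, mul_one] at hlim
  refine (hlim.inv₀ (by positivity)).congr' ?_ |>.mono_right (by rw [one_div])
  filter_upwards [eventually_gt_atTop 0] with x hx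
  have hpos : 0 < b ^ 2 + x ^ 2 := by positivity
  rw [show b ^ 2 / x ^ 2 + 1 = (b ^ 2 + x ^ 2) / x ^ 2 by field_simp,
    sqrt_div hpos.le, sqrt_sq hx.le]
  have := sqrt_pos.2 hpos
  field_simp

theorem integrable_and_integral_sq_add_sq_rpow_neg_three_halves {b : ℝ} (hb : b ≠ 0) :
    Integrable (fun x : ℝ => (b ^ 2 + x ^ 2) ^ (-(3 : ℝ) / 2)) ∧
      ∫ x : ℝ, (b ^ 2 + x ^ 2) ^ (-(3 : ℝ) / 2) = 2 / b ^ 2 := by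
  have hodd : Function.Odd fun x : ℝ => x / (b ^ 2 * √(b ^ 2 + x ^ 2)) := fun x => by
    simp only [neg_sq, neg_div]
  have h := hodd.integrable_and_integral_deriv_eq_two_mul (hasDerivAt_div_mul_sqrt_sq_add_sq hb)
    (fun x => rpow_nonneg (by positivity) _) (tendsto_div_mul_sqrt_sq_add_sq hb)
  exact ⟨h.1, by rw [h.2]; ring⟩

theorem hasDerivAt_div_one_add_sq (t : ℝ) :
    HasDerivAt (fun t => t / (1 + t ^ 2)) ((1 - t ^ 2) / (1 + t ^ 2) ^ 2) t := by
  have hpos : 0 < 1 + t ^ 2 := by positivity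
  refine ((hasDerivAt_id t).div ((hasDerivAt_pow 2 t).const_add 1) hpos.ne').congr_deriv ?_
  field_simp
  simp only [id, Nat.cast_ofNat, Nat.add_one_sub_one, pow_one]
  ring

theorem tendsto_div_one_add_sq_atTop : Tendsto (fun t : ℝ => t / (1 + t ^ 2)) atTop (𝓝 0) := by
  refine tendsto_of_tendsto_of_tendsto_of_le_of_le' tendsto_const_nhds tendsto_inv_atTop_zero
    ?_ ?_ <;> filter_upwards [eventually_gt_atTop 0] with t ht
  · positivity
  · rw [div_le_iff₀ (by positivity), inv_mul_eq_div, le_div_iff₀ ht]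
    nlinarith

theorem integrable_and_integral_two_div_one_add_sq_sq :
    Integrable (fun t : ℝ => 2 / (1 + t ^ 2) ^ 2) ∧ ∫ t : ℝ, 2 / (1 + t ^ 2) ^ 2 = π := by
  have hodd : Function.Odd fun t => arctan t + t / (1 + t ^ 2) := fun t => by
    simp only [arctan_neg, neg_sq, neg_div]
    ring
  have hd : ∀ t, HasDerivAt (fun t => arctan t + t / (1 + t ^ 2)) (2 / (1 + t ^ 2) ^ 2) t :=
    fun t => ((hasDerivAt_arctan t).add (hasDerivAt_div_one_add_sq t)).congr_deriv (by
      field_simp; ring)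
  have h := hodd.integrable_and_integral_deriv_eq_two_mul hd (fun t => by positivity)
    ((tendsto_arctan_atTop.mono_right nhdsWithin_le_nhds).add tendsto_div_one_add_sq_atTop)
  exact ⟨h.1, by rw [h.2]; ring⟩

theorem integrable_and_integral_sq_mul_two_div_one_add_sq_sq :
    Integrable (fun t : ℝ => t ^ 2 * (2 / (1 + t ^ 2) ^ 2)) ∧
      ∫ t : ℝ, t ^ 2 * (2 / (1 + t ^ 2) ^ 2) = π := by
  have hodd : Function.Odd fun t => arctan t - t / (1 + t ^ 2) := fun t => by
    simp only [arctan_neg, neg_sq, neg_div]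
    ring
  have hd : ∀ t, HasDerivAt (fun t => arctan t - t / (1 + t ^ 2))
      (t ^ 2 * (2 / (1 + t ^ 2) ^ 2)) t :=
    fun t => ((hasDerivAt_arctan t).sub (hasDerivAt_div_one_add_sq t)).congr_deriv (by
      field_simp; ring)
  have h := hodd.integrable_and_integral_deriv_eq_two_mul hd (fun t => by positivity)
    ((tendsto_arctan_atTop.mono_right nhdsWithin_le_nhds).sub tendsto_div_one_add_sq_atTop)
  exact ⟨h.1, by rw [h.2]; ring⟩

theorem integrable_and_integral_prod_mul_rpow_neg_three_halves {φ : ℝ → ℝ} (hφm : AEMeasurable φ)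
    (hφ : Integrable fun t => φ t * (2 / (1 + t ^ 2) ^ 2)) :
    Integrable (fun p : ℝ × ℝ => φ p.2 * ((1 + p.2 ^ 2) ^ 2 + p.1 ^ 2) ^ (-(3 : ℝ) / 2)) ∧
      ∫ p : ℝ × ℝ, φ p.2 * ((1 + p.2 ^ 2) ^ 2 + p.1 ^ 2) ^ (-(3 : ℝ) / 2) =
        ∫ t, φ t * (2 / (1 + t ^ 2) ^ 2) := by
  have hinner (t : ℝ) :=
    integrable_and_integral_sq_add_sq_rpow_neg_three_halves (b := 1 + t ^ 2) (by positivity)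
  have hnorm (t : ℝ) : ∫ x, ‖φ t * ((1 + t ^ 2) ^ 2 + x ^ 2) ^ (-(3 : ℝ) / 2)‖ =
      ‖φ t * (2 / (1 + t ^ 2) ^ 2)‖ := by
    have hD (x : ℝ) : 0 ≤ ((1 + t ^ 2) ^ 2 + x ^ 2) ^ (-(3 : ℝ) / 2) :=
      rpow_nonneg (by positivity) _
    simp only [norm_mul, Real.norm_of_nonneg (hD _)]
    rw [integral_const_mul, (hinner t).2,
      Real.norm_of_nonneg (by positivity : (0 : ℝ) ≤ 2 / (1 + t ^ 2) ^ 2)]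
  have hmeas : AEStronglyMeasurable
      (fun p : ℝ × ℝ => φ p.2 * ((1 + p.2 ^ 2) ^ 2 + p.1 ^ 2) ^ (-(3 : ℝ) / 2))
      (volume.prod volume) :=
    (hφm.comp_snd.mul (by fun_prop)).aestronglyMeasurable
  rw [Measure.volume_eq_prod]
  have hint := (integrable_prod_iff' hmeas).2
    ⟨ae_of_all _ fun t => (hinner t).1.const_mul (φ t), by simpa only [hnorm] using hφ.norm⟩
  refine ⟨hint, (integral_prod_symm _ hint).trans (integral_congr_ae (ae_of_all _ fun t => ?_))⟩
  simp only [integral_const_mul, (hinner t).2]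

theorem abs_rpow_neg_one_fourth_pow_six {y : ℝ} (hy : 0 ≤ y) :
    |y ^ (-(1 : ℝ) / 4)| ^ 6 = y ^ (-(3 : ℝ) / 2) := by
  rw [abs_of_nonneg (rpow_nonneg hy _), ← rpow_natCast, ← rpow_mul hy]
  norm_num

theorem grushin_energy_density (x t : ℝ) :
    deriv (fun t => ((1 + t ^ 2) ^ 2 + x ^ 2) ^ (-(1 : ℝ) / 4)) t ^ 2 +
        4 * t ^ 2 * deriv (fun x => ((1 + t ^ 2) ^ 2 + x ^ 2) ^ (-(1 : ℝ) / 4)) x ^ 2 =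
      t ^ 2 * ((1 + t ^ 2) ^ 2 + x ^ 2) ^ (-(3 : ℝ) / 2) := by
  have hD : 0 < (1 + t ^ 2) ^ 2 + x ^ 2 := by positivity
  have hdt := ((((hasDerivAt_pow 2 t).const_add 1).fun_pow 2).add_const (x ^ 2)).rpow_const
    (p := -(1 : ℝ) / 4) (Or.inl hD.ne')
  have hdx := ((hasDerivAt_pow 2 x).const_add ((1 + t ^ 2) ^ 2)).rpow_const
    (p := -(1 : ℝ) / 4) (Or.inl hD.ne')
  have hpow : (((1 + t ^ 2) ^ 2 + x ^ 2) ^ (-(1 : ℝ) / 4 - 1)) ^ 2 * ((1 + t ^ 2) ^ 2 + x ^ 2) =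
      ((1 + t ^ 2) ^ 2 + x ^ 2) ^ (-(3 : ℝ) / 2) := by
    rw [← rpow_natCast, ← rpow_mul hD.le, ← rpow_add_one hD.ne']
    norm_num
  rw [hdt.deriv, hdx.deriv, ← hpow]
  simp only [Nat.cast_ofNat, Nat.add_one_sub_one, pow_one]
  ring

/-- The function `f(x,t) = ((1+t²)² + x²)^(-1/4)` is an extremal for the sharp
Grushin Sobolev inequality on `ℝ²`: both sides are finite and equality holds. -/
theorem grushin_extremal_R2 (f : ℝ × ℝ → ℝ)
    (hf : ∀ x t : ℝ, f (x, t) = (((1 + t ^ 2) ^ 2 + x ^ 2) : ℝ) ^ (-(1 : ℝ) / 4)) :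
    Integrable (fun p : ℝ × ℝ => |f p| ^ 6) ∧
    Integrable (fun p : ℝ × ℝ =>
      (deriv (fun t : ℝ => f (p.1, t)) p.2) ^ 2
        + 4 * p.2 ^ 2 * (deriv (fun x : ℝ => f (x, p.2)) p.1) ^ 2) ∧
    (∫ p : ℝ × ℝ, |f p| ^ 6) ^ ((1 : ℝ) / 3) =
      Real.pi ^ (-(2 : ℝ) / 3) *
        ∫ p : ℝ × ℝ,
          ((deriv (fun t : ℝ => f (p.1, t)) p.2) ^ 2
            + 4 * p.2 ^ 2 * (deriv (fun x : ℝ => f (x, p.2)) p.1) ^ 2) := by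
  obtain rfl : f = fun p => ((1 + p.2 ^ 2) ^ 2 + p.1 ^ 2) ^ (-(1 : ℝ) / 4) :=
    funext fun p => hf p.1 p.2
  have hsix : (fun p : ℝ × ℝ => |((1 + p.2 ^ 2) ^ 2 + p.1 ^ 2) ^ (-(1 : ℝ) / 4)| ^ 6) =
      fun p => ((1 + p.2 ^ 2) ^ 2 + p.1 ^ 2) ^ (-(3 : ℝ) / 2) :=
    funext fun p => abs_rpow_neg_one_fourth_pow_six (by positivity)
  have henergy : (fun p : ℝ × ℝ =>
      deriv (fun t => ((1 + t ^ 2) ^ 2 + p.1 ^ 2) ^ (-(1 : ℝ) / 4)) p.2 ^ 2 +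
        4 * p.2 ^ 2 * deriv (fun x => ((1 + p.2 ^ 2) ^ 2 + x ^ 2) ^ (-(1 : ℝ) / 4)) p.1 ^ 2) =
      fun p => p.2 ^ 2 * ((1 + p.2 ^ 2) ^ 2 + p.1 ^ 2) ^ (-(3 : ℝ) / 2) :=
    funext fun p => grushin_energy_density p.1 p.2
  obtain ⟨hint_six, hval_six⟩ := integrable_and_integral_prod_mul_rpow_neg_three_halves
    (φ := fun _ => 1) aemeasurable_const
    (by simpa only [one_mul] using integrable_and_integral_two_div_one_add_sq_sq.1)
  obtain ⟨hint_energy, hval_energy⟩ := integrable_and_integral_prod_mul_rpow_neg_three_halves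
    (φ := fun t => t ^ 2) (by fun_prop) integrable_and_integral_sq_mul_two_div_one_add_sq_sq.1
  simp only [one_mul, integrable_and_integral_two_div_one_add_sq_sq.2] at hint_six hval_six
  rw [integrable_and_integral_sq_mul_two_div_one_add_sq_sq.2] at hval_energy
  beta_reduce
  rw [hsix, henergy, hval_six, hval_energy, ← rpow_add_one pi_pos.ne']
  exact ⟨hint_six, hint_energy, by norm_num⟩
end

section
/- For every continuously differentiable compactly supported function F : M → ℝ on the upper half-plane M, (∫_M |F|⁶ dν)^{1/3} ≤ 4·π^{-2/3} · [ ∫_{y>0} |∇F(x,y)|² dx dy − (3/16) ∫_M |F|² dν ]. -/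
/-!
Write `F = √y · u`. Since `∫ u ∂ᵧu = 0`, the Euclidean Dirichlet integral of `F` equals
`X + Y + H / 4`, where `X = ∫ y (∂ₓu)²`, `Y = ∫ y (∂ᵧu)²` and `H = ∫ u² / y = ∫ F² dν`, while
`∫ |F|⁶ dν = ∫ y u⁶`; so the bracket on the right is `X + Y + H / 16`.

For a compactly supported `C¹` function `g` of one variable, `g² ≤ ∫ |g| |g'|`, hence by
Cauchy–Schwarz `∫ g⁶ ≤ (∫ g²)² ∫ g'²`. Along horizontal lines this gives
`∫ u⁶ dx ≤ (∫ u² dx)² ∫ (∂ₓu)² dx`. Along vertical lines `u² ≤ ∫ |u| |∂ᵧu| dy`, and integrating in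
`x` and applying Cauchy–Schwarz with the weight `y` gives `(∫ u² dx)² ≤ H Y` at every height.
Multiplying by `y` and integrating, `∫ y u⁶ ≤ H Y X ≤ 16 ((X + Y + H / 16) / 3)³` by AM–GM, and
`16 / 27 ≤ 64 / π² = (4 π^{-2/3})³`.
-/

open MeasureTheory Real Set Filter Topology

theorem sq_integral_mul_le_integral_sq_mul_integral_sq {α : Type*} [MeasurableSpace α]
    {μ : Measure α} {f g : α → ℝ} (hf : Integrable (fun a => f a ^ 2) μ)
    (hg : Integrable (fun a => g a ^ 2) μ) (hfg : Integrable (fun a => f a * g a) μ) :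
    (∫ a, f a * g a ∂μ) ^ 2 ≤ (∫ a, f a ^ 2 ∂μ) * ∫ a, g a ^ 2 ∂μ := by
  have hquad : ∀ s : ℝ, 0 ≤ (∫ a, f a ^ 2 ∂μ) * (s * s) + 2 * (∫ a, f a * g a ∂μ) * s
      + ∫ a, g a ^ 2 ∂μ := by
    intro s
    calc 0 ≤ ∫ a, (s * f a + g a) ^ 2 ∂μ := integral_nonneg fun a => sq_nonneg _
      _ = ∫ a, (s * s * f a ^ 2 + 2 * s * (f a * g a) + g a ^ 2) ∂μ := by
          congr 1 with a; ring
      _ = _ := by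
          have h₁ : Integrable (fun a => s * s * f a ^ 2 + 2 * s * (f a * g a)) μ :=
            (hf.const_mul _).add (hfg.const_mul _)
          rw [integral_add h₁ hg, integral_add (hf.const_mul _) (hfg.const_mul _),
            integral_const_mul, integral_const_mul]
          ring
  have := discrim_le_zero hquad
  rw [discrim] at this
  nlinarith

theorem IsCompact.integrable_of_continuousOn {X : Type*} [TopologicalSpace X] [T2Space X]
    [MeasurableSpace X] [OpensMeasurableSpace X] {μ : Measure X} [IsFiniteMeasureOnCompacts μ]
    {K : Set X} (hK : IsCompact K) {f : X → ℝ} (hf : ContinuousOn f K)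
    (h0 : ∀ x ∉ K, f x = 0) : Integrable f μ :=
  (hf.integrableOn_compact hK).integrable_of_forall_notMem_eq_zero h0

theorem HasCompactSupport.pow {α β : Type*} [TopologicalSpace α] [MonoidWithZero β]
    {f : α → β} (hc : HasCompactSupport f) {n : ℕ} (hn : n ≠ 0) :
    HasCompactSupport (fun x => f x ^ n) :=
  hc.comp_left (g := (· ^ n)) (zero_pow hn)

theorem HasCompactSupport.comp_prodMkLeft {X Y β : Type*} [TopologicalSpace X] [T2Space X]
    [TopologicalSpace Y] [Zero β] {f : X × Y → β} (hc : HasCompactSupport f) (y : Y) :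
    HasCompactSupport fun x => f (x, y) :=
  .intro (hc.image continuous_fst) fun x hx => by
    by_contra h
    exact hx ⟨(x, y), subset_tsupport _ h, rfl⟩

theorem HasCompactSupport.comp_prodMkRight {X Y β : Type*} [TopologicalSpace X]
    [TopologicalSpace Y] [T2Space Y] [Zero β] {f : X × Y → β} (hc : HasCompactSupport f) (x : X) :
    HasCompactSupport fun y => f (x, y) :=
  .intro (hc.image continuous_snd) fun y hy => by
    by_contra h
    exact hy ⟨(x, y), subset_tsupport _ h, rfl⟩

theorem contDiff_of_tsupport {𝕜 E F : Type*} [NontriviallyNormedField 𝕜] [NormedAddCommGroup E]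
    [NormedSpace 𝕜 E] [NormedAddCommGroup F] [NormedSpace 𝕜 F] {f : E → F} {n : WithTop ℕ∞}
    (hf : ∀ x ∈ tsupport f, ContDiffAt 𝕜 n f x) : ContDiff 𝕜 n f :=
  contDiff_iff_contDiffAt.2 fun x => (em (x ∈ tsupport f)).elim (hf x) fun hx =>
    contDiffAt_const.congr_of_eventuallyEq (notMem_tsupport_iff_eventuallyEq.1 hx)

theorem mul_mul_le_add_add_div_three_pow_three {a b c : ℝ} (ha : 0 ≤ a) (hb : 0 ≤ b)
    (hc : 0 ≤ c) : a * b * c ≤ ((a + b + c) / 3) ^ 3 := by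
  nlinarith [sq_nonneg (a - b), sq_nonneg (b - c), sq_nonneg (a - c),
    mul_nonneg ha (sq_nonneg (b - c)), mul_nonneg hb (sq_nonneg (a - c)),
    mul_nonneg hc (sq_nonneg (a - b)),
    mul_nonneg (add_nonneg (add_nonneg ha hb) hc) (sq_nonneg (a - b)),
    mul_nonneg (add_nonneg (add_nonneg ha hb) hc) (sq_nonneg (b - c)),
    mul_nonneg (add_nonneg (add_nonneg ha hb) hc) (sq_nonneg (a - c))]

theorem four_mul_pi_rpow_pow_three : (4 * π ^ (-(2 : ℝ) / 3)) ^ 3 = 64 / π ^ 2 := by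
  rw [mul_pow, ← rpow_natCast (π ^ _), ← rpow_mul pi_pos.le,
    show -(2 : ℝ) / 3 * (3 : ℕ) = -2 by norm_num, rpow_neg pi_pos.le, rpow_two]
  norm_num [div_eq_mul_inv]

theorem rpow_one_third_le_of_le_mul_mul {P X Y H : ℝ} (hP : 0 ≤ P) (hX : 0 ≤ X) (hY : 0 ≤ Y)
    (hH : 0 ≤ H) (h : P ≤ H * Y * X) :
    P ^ ((1 : ℝ) / 3) ≤ 4 * π ^ (-(2 : ℝ) / 3) * (X + Y + H / 16) := by
  set S := X + Y + H / 16
  have hS : 0 ≤ S := by positivity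
  have hcS : 0 ≤ 4 * π ^ (-(2 : ℝ) / 3) * S := by positivity
  have hπ : π ^ 2 ≤ 108 := by nlinarith [pi_le_four, pi_pos]
  have hcube : P ≤ (4 * π ^ (-(2 : ℝ) / 3) * S) ^ 3 :=
    calc P ≤ 16 * (X * Y * (H / 16)) := by linarith
      _ ≤ 16 * (S / 3) ^ 3 := by
          gcongr; exact mul_mul_le_add_add_div_three_pow_three hX hY (by positivity)
      _ = 16 / 27 * S ^ 3 := by ring
      _ ≤ 64 / π ^ 2 * S ^ 3 := by
          refine mul_le_mul_of_nonneg_right ?_ (pow_nonneg hS 3)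
          rw [div_le_div_iff₀ (by norm_num) (by positivity)]
          linarith
      _ = (4 * π ^ (-(2 : ℝ) / 3) * S) ^ 3 := by rw [mul_pow _ S, four_mul_pi_rpow_pow_three]
  calc P ^ ((1 : ℝ) / 3) ≤ ((4 * π ^ (-(2 : ℝ) / 3) * S) ^ 3) ^ ((1 : ℝ) / 3) :=
        rpow_le_rpow hP hcube (by norm_num)
    _ = 4 * π ^ (-(2 : ℝ) / 3) * S := by
        have h := pow_rpow_inv_natCast hcS (n := 3) (by norm_num)
        rwa [Nat.cast_ofNat, ← one_div] at h

section OneDim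

variable {f : ℝ → ℝ}

theorem HasCompactSupport.integral_deriv_eq_zero (hc : HasCompactSupport f)
    (hf : ContDiff ℝ 1 f) : ∫ x, deriv f x = 0 := by
  have hint : Integrable (deriv f) :=
    (hf.continuous_deriv le_rfl).integrable_of_hasCompactSupport hc.deriv
  rw [← intervalIntegral.integral_Iic_add_Ioi (b := 0) hint.integrableOn hint.integrableOn,
    hc.integral_Iic_deriv_eq hf, hc.integral_Ioi_deriv_eq hf, add_neg_cancel]

theorem HasCompactSupport.two_mul_le_integral_abs_deriv (hc : HasCompactSupport f)
    (hf : ContDiff ℝ 1 f) (x : ℝ) : 2 * f x ≤ ∫ t, |deriv f t| := by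
  have hint : Integrable (fun t => |deriv f t|) :=
    ((hf.continuous_deriv le_rfl).integrable_of_hasCompactSupport hc.deriv).abs
  have hleft : f x ≤ ∫ t in Iic x, |deriv f t| := by
    rw [← hc.integral_Iic_deriv_eq hf x]
    exact (le_abs_self _).trans abs_integral_le_integral_abs
  have hright : f x ≤ ∫ t in Ioi x, |deriv f t| := by
    rw [← neg_neg (f x), ← hc.integral_Ioi_deriv_eq hf x]
    exact (neg_le_abs _).trans abs_integral_le_integral_abs
  rw [← intervalIntegral.integral_Iic_add_Ioi hint.integrableOn hint.integrableOn]
  linarith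

theorem deriv_sq_eq_two_mul_mul_deriv (hf : Differentiable ℝ f) (t : ℝ) :
    deriv (fun t => f t ^ 2) t = 2 * (f t * deriv f t) := by
  rw [deriv_fun_pow (hf t)]
  ring

theorem HasCompactSupport.integral_mul_deriv_eq_zero (hc : HasCompactSupport f)
    (hf : ContDiff ℝ 1 f) : ∫ t, f t * deriv f t = 0 := by
  have h := (hc.pow two_ne_zero).integral_deriv_eq_zero (hf.pow 2)
  simp only [deriv_sq_eq_two_mul_mul_deriv (hf.differentiable one_ne_zero), integral_const_mul] at h
  linarith

theorem HasCompactSupport.sq_le_integral_abs_mul_abs_deriv (hc : HasCompactSupport f)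
    (hf : ContDiff ℝ 1 f) (x : ℝ) : f x ^ 2 ≤ ∫ t, |f t| * |deriv f t| := by
  have h := (hc.pow two_ne_zero).two_mul_le_integral_abs_deriv (hf.pow 2) x
  simp only [deriv_sq_eq_two_mul_mul_deriv (hf.differentiable one_ne_zero), abs_mul, abs_two,
    integral_const_mul] at h
  linarith

theorem HasCompactSupport.integral_pow_six_le (hc : HasCompactSupport f) (hf : ContDiff ℝ 1 f) :
    ∫ t, f t ^ 6 ≤ (∫ t, f t ^ 2) ^ 2 * ∫ t, deriv f t ^ 2 := by
  set A := ∫ t, |f t| * |deriv f t|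
  have hd : Continuous (deriv f) := hf.continuous_deriv le_rfl
  have hf2 : Integrable fun t => f t ^ 2 :=
    (hf.continuous.pow 2).integrable_of_hasCompactSupport (hc.pow two_ne_zero)
  have hd2 : Integrable fun t => deriv f t ^ 2 :=
    (hd.pow 2).integrable_of_hasCompactSupport (hc.deriv.pow two_ne_zero)
  have hcs : A ^ 2 ≤ (∫ t, f t ^ 2) * ∫ t, deriv f t ^ 2 := by
    have h := sq_integral_mul_le_integral_sq_mul_integral_sq (f := fun t => |f t|)
      (g := fun t => |deriv f t|) (by simpa only [sq_abs] using hf2)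
      (by simpa only [sq_abs] using hd2)
      ((hf.continuous.abs.mul hd.abs).integrable_of_hasCompactSupport hc.abs.mul_right)
    simpa only [sq_abs] using h
  have hpt : ∀ t, f t ^ 6 ≤ A ^ 2 * f t ^ 2 := fun t => by
    have := pow_le_pow_left₀ (sq_nonneg _) (hc.sq_le_integral_abs_mul_abs_deriv hf t) 2
    nlinarith [sq_nonneg (f t), sq_nonneg (f t ^ 2)]
  calc ∫ t, f t ^ 6 ≤ ∫ t, A ^ 2 * f t ^ 2 :=
        integral_mono ((hf.continuous.pow 6).integrable_of_hasCompactSupport (hc.pow (by norm_num)))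
          (hf2.const_mul _) hpt
    _ = A ^ 2 * ∫ t, f t ^ 2 := integral_const_mul _ _
    _ ≤ (∫ t, f t ^ 2) ^ 2 * ∫ t, deriv f t ^ 2 := by
        have : 0 ≤ ∫ t, f t ^ 2 := integral_nonneg fun t => sq_nonneg (f t)
        nlinarith

end OneDim

noncomputable def partialFst (f : ℝ × ℝ → ℝ) (p : ℝ × ℝ) : ℝ := deriv (fun x => f (x, p.2)) p.1

noncomputable def partialSnd (f : ℝ × ℝ → ℝ) (p : ℝ × ℝ) : ℝ := deriv (fun y => f (p.1, y)) p.2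

section Partial

variable {f : ℝ × ℝ → ℝ}

theorem partialFst_eq_fderiv (hf : Differentiable ℝ f) (p : ℝ × ℝ) :
    partialFst f p = fderiv ℝ f p (1, 0) :=
  ((hf p).hasFDerivAt.comp_hasDerivAt p.1
    ((hasDerivAt_id p.1).prodMk (hasDerivAt_const p.1 p.2))).deriv

theorem partialSnd_eq_fderiv (hf : Differentiable ℝ f) (p : ℝ × ℝ) :
    partialSnd f p = fderiv ℝ f p (0, 1) :=
  ((hf p).hasFDerivAt.comp_hasDerivAt p.2
    ((hasDerivAt_const p.2 p.1).prodMk (hasDerivAt_id p.2))).deriv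

theorem ContDiff.continuous_partialFst (hf : ContDiff ℝ 1 f) : Continuous (partialFst f) := by
  simp_rw [funext (partialFst_eq_fderiv (hf.differentiable one_ne_zero))]
  exact (hf.continuous_fderiv one_ne_zero).clm_apply continuous_const

theorem ContDiff.continuous_partialSnd (hf : ContDiff ℝ 1 f) : Continuous (partialSnd f) := by
  simp_rw [funext (partialSnd_eq_fderiv (hf.differentiable one_ne_zero))]
  exact (hf.continuous_fderiv one_ne_zero).clm_apply continuous_const

theorem partialFst_of_notMem_tsupport {p : ℝ × ℝ} (hp : p ∉ tsupport f) : partialFst f p = 0 := by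
  have h : (fun x => f (x, p.2)) =ᶠ[𝓝 p.1] fun _ => 0 :=
    (continuous_id.prodMk continuous_const).tendsto p.1
      |>.eventually (notMem_tsupport_iff_eventuallyEq.1 hp)
  simp [partialFst, h.deriv_eq]

theorem partialSnd_of_notMem_tsupport {p : ℝ × ℝ} (hp : p ∉ tsupport f) : partialSnd f p = 0 := by
  have h : (fun y => f (p.1, y)) =ᶠ[𝓝 p.2] fun _ => 0 :=
    (continuous_const.prodMk continuous_id).tendsto p.2
      |>.eventually (notMem_tsupport_iff_eventuallyEq.1 hp)
  simp [partialSnd, h.deriv_eq]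

end Partial

section HalfPlane

variable {u : ℝ × ℝ → ℝ}

theorem integrable_mul_partialSnd (hu : ContDiff ℝ 1 u) (hc : HasCompactSupport u) :
    Integrable fun p => u p * partialSnd u p :=
  (hu.continuous.mul hu.continuous_partialSnd).integrable_of_hasCompactSupport hc.mul_right

theorem integrable_snd_mul_partialFst_sq (hu : ContDiff ℝ 1 u) (hc : HasCompactSupport u) :
    Integrable fun p => p.2 * partialFst u p ^ 2 :=
  hc.isCompact.integrable_of_continuousOn
    (continuous_snd.mul (hu.continuous_partialFst.pow 2)).continuousOn fun p hp => by
      simp [partialFst_of_notMem_tsupport hp]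

theorem integrable_snd_mul_partialSnd_sq (hu : ContDiff ℝ 1 u) (hc : HasCompactSupport u) :
    Integrable fun p => p.2 * partialSnd u p ^ 2 :=
  hc.isCompact.integrable_of_continuousOn
    (continuous_snd.mul (hu.continuous_partialSnd.pow 2)).continuousOn fun p hp => by
      simp [partialSnd_of_notMem_tsupport hp]

theorem integrable_sq_div_snd (hu : ContDiff ℝ 1 u) (hc : HasCompactSupport u)
    (hpos : ∀ p ∈ tsupport u, 0 < p.2) : Integrable fun p => u p ^ 2 / p.2 :=
  hc.isCompact.integrable_of_continuousOn ((hu.continuous.pow 2).continuousOn.div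
    continuous_snd.continuousOn fun p hp => (hpos p hp).ne') fun p hp => by
      simp [image_eq_zero_of_notMem_tsupport hp]

theorem integral_mul_partialSnd_eq_zero (hu : ContDiff ℝ 1 u) (hc : HasCompactSupport u) :
    ∫ p, u p * partialSnd u p = 0 := by
  have hslice (x : ℝ) : ∫ y, u (x, y) * partialSnd u (x, y) = 0 :=
    (hc.comp_prodMkRight x).integral_mul_deriv_eq_zero (by fun_prop)
  rw [Measure.volume_eq_prod, integral_prod _ (integrable_mul_partialSnd hu hc)]
  simp only [hslice, integral_zero]

theorem integral_sq_slice_le (hu : ContDiff ℝ 1 u) (hc : HasCompactSupport u) (y : ℝ) :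
    ∫ x, u (x, y) ^ 2 ≤ ∫ p, |u p| * |partialSnd u p| := by
  have hint : Integrable fun p => |u p| * |partialSnd u p| := by
    simpa only [abs_mul] using (integrable_mul_partialSnd hu hc).abs
  rw [Measure.volume_eq_prod, integral_prod _ hint]
  refine integral_mono ((hu.continuous.comp (by fun_prop)).pow 2 |>.integrable_of_hasCompactSupport
    ((hc.comp_prodMkLeft y).pow two_ne_zero)) hint.integral_prod_left fun x => ?_
  exact (hc.comp_prodMkRight x).sq_le_integral_abs_mul_abs_deriv (by fun_prop) y

theorem sq_integral_abs_mul_abs_partialSnd_le (hu : ContDiff ℝ 1 u) (hc : HasCompactSupport u)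
    (hpos : ∀ p ∈ tsupport u, 0 < p.2) :
    (∫ p, |u p| * |partialSnd u p|) ^ 2 ≤
      (∫ p, u p ^ 2 / p.2) * ∫ p, p.2 * partialSnd u p ^ 2 := by
  set f : ℝ × ℝ → ℝ := fun p => |u p| / √p.2
  set g : ℝ × ℝ → ℝ := fun p => √p.2 * |partialSnd u p|
  have hf (p : ℝ × ℝ) : f p ^ 2 = u p ^ 2 / p.2 := by
    by_cases hp : p ∈ tsupport u
    · simp only [f, div_pow, sq_abs, sq_sqrt (hpos p hp).le]
    · simp [f, image_eq_zero_of_notMem_tsupport hp]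
  have hg (p : ℝ × ℝ) : g p ^ 2 = p.2 * partialSnd u p ^ 2 := by
    by_cases hp : p ∈ tsupport u
    · simp only [g, mul_pow, sq_abs, sq_sqrt (hpos p hp).le]
    · simp [g, partialSnd_of_notMem_tsupport hp]
  have hfg (p : ℝ × ℝ) : f p * g p = |u p * partialSnd u p| := by
    by_cases hp : p ∈ tsupport u
    · have := (sqrt_pos.2 (hpos p hp)).ne'
      simp only [f, g, abs_mul]
      field_simp
    · simp [f, g, image_eq_zero_of_notMem_tsupport hp]
  have h := sq_integral_mul_le_integral_sq_mul_integral_sq (f := f) (g := g)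
    (by simpa only [hf] using integrable_sq_div_snd hu hc hpos)
    (by simpa only [hg] using integrable_snd_mul_partialSnd_sq hu hc)
    (by simpa only [hfg] using (integrable_mul_partialSnd hu hc).abs)
  simpa only [hf, hg, hfg, abs_mul] using h

theorem integral_snd_mul_pow_six_le (hu : ContDiff ℝ 1 u) (hc : HasCompactSupport u)
    (hpos : ∀ p ∈ tsupport u, 0 < p.2) :
    ∫ p, p.2 * u p ^ 6 ≤ (∫ p, u p ^ 2 / p.2) * (∫ p, p.2 * partialSnd u p ^ 2) *
      ∫ p, p.2 * partialFst u p ^ 2 := by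
  set HY := (∫ p, u p ^ 2 / p.2) * ∫ p, p.2 * partialSnd u p ^ 2
  have hslice (y : ℝ) : (∫ x, u (x, y) ^ 2) ^ 2 ≤ HY :=
    (pow_le_pow_left₀ (integral_nonneg fun _ => sq_nonneg _) (integral_sq_slice_le hu hc y) 2).trans
      (sq_integral_abs_mul_abs_partialSnd_le hu hc hpos)
  have hline (y : ℝ) :
      ∫ x, y * u (x, y) ^ 6 ≤ HY * ∫ x, y * partialFst u (x, y) ^ 2 := by
    rcases le_or_gt y 0 with hy | hy
    · have hout (x : ℝ) : (x, y) ∉ tsupport u := fun h => (hpos _ h).not_ge hy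
      simp [image_eq_zero_of_notMem_tsupport (hout _), partialFst_of_notMem_tsupport (hout _)]
    · have hX : 0 ≤ ∫ x, partialFst u (x, y) ^ 2 := integral_nonneg fun _ => sq_nonneg _
      rw [integral_const_mul, integral_const_mul]
      calc y * ∫ x, u (x, y) ^ 6
          ≤ y * ((∫ x, u (x, y) ^ 2) ^ 2 * ∫ x, partialFst u (x, y) ^ 2) :=
            mul_le_mul_of_nonneg_left
              ((hc.comp_prodMkLeft y).integral_pow_six_le (by fun_prop)) hy.le
        _ ≤ y * (HY * ∫ x, partialFst u (x, y) ^ 2) := by gcongr; exact hslice y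
        _ = HY * (y * ∫ x, partialFst u (x, y) ^ 2) := by ring
  have hP : Integrable fun p => p.2 * u p ^ 6 :=
    (continuous_snd.mul (hu.continuous.pow 6)).integrable_of_hasCompactSupport
      (hc.pow (by norm_num)).mul_left
  have hX := integrable_snd_mul_partialFst_sq hu hc
  rw [Measure.volume_eq_prod, integral_prod_symm _ hP, integral_prod_symm _ hX,
    ← integral_const_mul]
  exact integral_mono hP.integral_prod_right (hX.integral_prod_right.const_mul _) hline

theorem integral_snd_mul_sq_nonneg {g : ℝ × ℝ → ℝ} (hg : ∀ p, g p ≠ 0 → 0 < p.2) :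
    0 ≤ ∫ p, p.2 * g p ^ 2 :=
  integral_nonneg fun p => by
    by_cases h : g p = 0
    · simp [h]
    · exact mul_nonneg (hg p h).le (sq_nonneg _)

end HalfPlane

section SqrtSndMul

variable {u : ℝ × ℝ → ℝ}

theorem partialFst_sqrt_snd_mul (hu : Differentiable ℝ u) (p : ℝ × ℝ) :
    partialFst (fun q => √q.2 * u q) p = √p.2 * partialFst u p :=
  deriv_const_mul (d := fun x => u (x, p.2)) (x := p.1) √p.2 (by fun_prop)

theorem partialSnd_sqrt_snd_mul (hu : Differentiable ℝ u) {p : ℝ × ℝ} (hp : 0 < p.2) :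
    partialSnd (fun q => √q.2 * u q) p = √p.2 * partialSnd u p + u p / (2 * √p.2) := by
  rw [partialSnd, partialSnd, deriv_fun_mul (hasDerivAt_sqrt hp.ne').differentiableAt
    (by fun_prop), (hasDerivAt_sqrt hp.ne').deriv]
  ring

theorem sq_partialFst_add_sq_partialSnd_sqrt_snd_mul (hu : Differentiable ℝ u) {p : ℝ × ℝ}
    (hp : 0 < p.2) :
    partialFst (fun q => √q.2 * u q) p ^ 2 + partialSnd (fun q => √q.2 * u q) p ^ 2 =
      p.2 * partialFst u p ^ 2 + p.2 * partialSnd u p ^ 2 + u p * partialSnd u p +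
        u p ^ 2 / p.2 / 4 := by
  have hs : √p.2 ≠ 0 := (sqrt_pos.2 hp).ne'
  rw [partialFst_sqrt_snd_mul hu, partialSnd_sqrt_snd_mul hu hp]
  have hsq : √p.2 ^ 2 = p.2 := sq_sqrt hp.le
  field_simp
  rw [show √p.2 ^ 4 = (√p.2 ^ 2) ^ 2 by ring, hsq]
  ring

theorem setIntegral_snd_pos_eq_integral {f g : ℝ × ℝ → ℝ} (hfg : ∀ p : ℝ × ℝ, 0 < p.2 → f p = g p)
    (hg : ∀ p : ℝ × ℝ, ¬0 < p.2 → g p = 0) : ∫ p in {p : ℝ × ℝ | 0 < p.2}, f p = ∫ p, g p :=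
  (setIntegral_congr_fun (measurableSet_lt measurable_const measurable_snd) hfg).trans
    (setIntegral_eq_integral_of_forall_compl_eq_zero hg)

theorem setIntegral_abs_sqrt_snd_mul_pow_six (hpos : ∀ p ∈ tsupport u, 0 < p.2) :
    ∫ p in {p : ℝ × ℝ | 0 < p.2}, |√p.2 * u p| ^ 6 / p.2 ^ 2 = ∫ p, p.2 * u p ^ 6 := by
  refine setIntegral_snd_pos_eq_integral (fun p hp => ?_) fun p hp => by
    simp [image_eq_zero_of_notMem_tsupport fun h => hp (hpos p h)]
  rw [show |√p.2 * u p| ^ 6 = ((√p.2 * u p) ^ 2) ^ 3 by rw [← sq_abs]; ring, mul_pow,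
    sq_sqrt hp.le]
  field_simp

theorem setIntegral_sqrt_snd_mul_sq_div (hpos : ∀ p ∈ tsupport u, 0 < p.2) :
    ∫ p in {p : ℝ × ℝ | 0 < p.2}, (√p.2 * u p) ^ 2 / p.2 ^ 2 = ∫ p, u p ^ 2 / p.2 := by
  refine setIntegral_snd_pos_eq_integral (fun p hp => ?_) fun p hp => by
    simp [image_eq_zero_of_notMem_tsupport fun h => hp (hpos p h)]
  rw [mul_pow, sq_sqrt hp.le]
  field_simp

theorem setIntegral_sq_partialFst_add_sq_partialSnd_sqrt_snd_mul (hu : ContDiff ℝ 1 u)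
    (hc : HasCompactSupport u) (hpos : ∀ p ∈ tsupport u, 0 < p.2) :
    ∫ p in {p : ℝ × ℝ | 0 < p.2},
      (partialFst (fun q => √q.2 * u q) p ^ 2 + partialSnd (fun q => √q.2 * u q) p ^ 2) =
        (∫ p, p.2 * partialFst u p ^ 2) + (∫ p, p.2 * partialSnd u p ^ 2) +
          (∫ p, u p ^ 2 / p.2) / 4 := by
  have hX := integrable_snd_mul_partialFst_sq hu hc
  have hY := integrable_snd_mul_partialSnd_sq hu hc
  have hM := integrable_mul_partialSnd hu hc
  have hH := (integrable_sq_div_snd hu hc hpos).div_const 4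
  have hout {p : ℝ × ℝ} (hp : ¬0 < p.2) : p ∉ tsupport u := fun h => hp (hpos p h)
  rw [setIntegral_snd_pos_eq_integral
      (fun p hp => sq_partialFst_add_sq_partialSnd_sqrt_snd_mul (hu.differentiable one_ne_zero) hp)
      fun p hp => by
        simp [image_eq_zero_of_notMem_tsupport (hout hp), partialFst_of_notMem_tsupport (hout hp),
          partialSnd_of_notMem_tsupport (hout hp)],
    integral_add (by exact (hX.add hY).add hM) hH, integral_add (by exact hX.add hY) hM,
    integral_add hX hY, integral_div, integral_mul_partialSnd_eq_zero hu hc, add_zero]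

theorem hyperbolic_sobolev_sqrt_snd_mul (hu : ContDiff ℝ 1 u) (hc : HasCompactSupport u)
    (hpos : ∀ p ∈ tsupport u, 0 < p.2) :
    (∫ p in {p : ℝ × ℝ | 0 < p.2}, |√p.2 * u p| ^ 6 / p.2 ^ 2) ^ ((1 : ℝ) / 3) ≤
      4 * π ^ (-(2 : ℝ) / 3) *
        ((∫ p in {p : ℝ × ℝ | 0 < p.2},
            (partialFst (fun q => √q.2 * u q) p ^ 2 + partialSnd (fun q => √q.2 * u q) p ^ 2))
          - 3 / 16 * ∫ p in {p : ℝ × ℝ | 0 < p.2}, (√p.2 * u p) ^ 2 / p.2 ^ 2) := by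
  have hs : MeasurableSet {p : ℝ × ℝ | 0 < p.2} := measurableSet_lt measurable_const measurable_snd
  have hP := setIntegral_abs_sqrt_snd_mul_pow_six hpos
  have hH := setIntegral_sqrt_snd_mul_sq_div hpos
  have hP₀ : 0 ≤ ∫ p, p.2 * u p ^ 6 := hP ▸ setIntegral_nonneg hs fun _ _ => by positivity
  have hH₀ : 0 ≤ ∫ p, u p ^ 2 / p.2 := hH ▸ setIntegral_nonneg hs fun _ _ => by positivity
  rw [hP, hH, setIntegral_sq_partialFst_add_sq_partialSnd_sqrt_snd_mul hu hc hpos,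
    show ∀ X Y H : ℝ, X + Y + H / 4 - 3 / 16 * H = X + Y + H / 16 by intros; ring]
  exact rpow_one_third_le_of_le_mul_mul hP₀
    (integral_snd_mul_sq_nonneg fun p h => hpos p (by_contra (h ∘ partialFst_of_notMem_tsupport)))
    (integral_snd_mul_sq_nonneg fun p h => hpos p (by_contra (h ∘ partialSnd_of_notMem_tsupport)))
    hH₀ (integral_snd_mul_pow_six_le hu hc hpos)

end SqrtSndMul

theorem exists_eq_sqrt_snd_mul {F : ℝ × ℝ → ℝ} (hF : ContDiff ℝ 1 F) (hc : HasCompactSupport F)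
    (hpos : ∀ p ∈ tsupport F, 0 < p.2) :
    ∃ u : ℝ × ℝ → ℝ, ContDiff ℝ 1 u ∧ HasCompactSupport u ∧ (∀ p ∈ tsupport u, 0 < p.2) ∧
      F = fun q => √q.2 * u q := by
  have hsupp : tsupport (fun q : ℝ × ℝ => (√q.2)⁻¹ * F q) ⊆ tsupport F := tsupport_mul_subset_right
  refine ⟨fun q => (√q.2)⁻¹ * F q, contDiff_of_tsupport fun p hp => ?_, hc.mul_left,
    fun p hp => hpos p (hsupp hp), funext fun q => ?_⟩
  · have hy := hpos p (hsupp hp)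
    exact ((contDiffAt_sqrt hy.ne').comp p contDiffAt_snd |>.inv (sqrt_pos.2 hy).ne').mul
      hF.contDiffAt
  · by_cases hq : q ∈ tsupport F
    · rw [mul_inv_cancel_left₀ (sqrt_pos.2 (hpos q hq)).ne']
    · simp [image_eq_zero_of_notMem_tsupport hq]

/-- Sharp hyperbolic Sobolev inequality (form with spectral constant 3/16) on the
upper half-plane `M = {(x,y) : y > 0}` with invariant measure `dν = y⁻² dx dy`:
`(∫_M |F|⁶ dν)^{1/3} ≤ 4 π^{-2/3} [ ∫_M |DF|² dν − (3/16) ∫_M |F|² dν ]`,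
where `∫_M |DF|² dν = ∫_{y>0} |∇F|² dx dy`. -/
theorem hyperbolic_sobolev_six_a (F : ℝ × ℝ → ℝ)
    (hF : ContDiff ℝ 1 F) (hsupp : HasCompactSupport F)
    (hsub : tsupport F ⊆ {p : ℝ × ℝ | 0 < p.2}) :
    (∫ p in {p : ℝ × ℝ | 0 < p.2}, |F p| ^ 6 / p.2 ^ 2) ^ ((1 : ℝ) / 3) ≤
      4 * Real.pi ^ (-(2 : ℝ) / 3) *
        ((∫ p in {p : ℝ × ℝ | 0 < p.2},
            ((deriv (fun x : ℝ => F (x, p.2)) p.1) ^ 2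
              + (deriv (fun y : ℝ => F (p.1, y)) p.2) ^ 2))
          - (3 / 16) * ∫ p in {p : ℝ × ℝ | 0 < p.2}, F p ^ 2 / p.2 ^ 2) := by
  obtain ⟨u, hu, hc, hpos, rfl⟩ := exists_eq_sqrt_snd_mul hF hsupp fun p hp => hsub hp
  exact hyperbolic_sobolev_sqrt_snd_mul hu hc hpos
end

section
/- For every continuously differentiable compactly supported function F : M → ℝ on the upper half-plane M, one has the spectral bound (1/4) ∫_M |F|² dν ≤ ∫_{y>0} |∇F(x,y)|² dx dy. -/
open MeasureTheory

/-! Discard `(∂ₓF)²` and apply Hardy's inequality `(1/4) ∫ (f / y)² ≤ ∫ f'²` on each vertical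
line `x = const`; Fubini then gives the bound. For Hardy's inequality write `f = y h`: the
function `y h² / 2` has compact support and derivative `f' h - h² / 2`, so `∫ f' h = (1/2) ∫ h²`,
and completing the square, `f'² ≥ f' h - h² / 4`, gives `∫ f'² ≥ (1/4) ∫ h²`. -/

theorem ContDiff.div_of_ne_zero_on_tsupport {𝕜 E : Type*} [NontriviallyNormedField 𝕜]
    [NormedAddCommGroup E] [NormedSpace 𝕜 E] {f g : E → 𝕜} {n : WithTop ℕ∞}
    (hf : ContDiff 𝕜 n f) (hg : ContDiff 𝕜 n g) (h0 : ∀ x ∈ tsupport f, g x ≠ 0) :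
    ContDiff 𝕜 n (fun x => f x / g x) := by
  refine contDiff_iff_contDiffAt.2 fun x => ?_
  by_cases hx : x ∈ tsupport f
  · exact hf.contDiffAt.fun_div hg.contDiffAt (h0 x hx)
  · refine (contDiffAt_const (c := 0)).congr_of_eventuallyEq ?_
    filter_upwards [notMem_tsupport_iff_eventuallyEq.1 hx] with y hy
    simp [hy]

theorem hardy_inequality_id_mul {h : ℝ → ℝ} (hh : ContDiff ℝ 1 h) (hc : HasCompactSupport h) :
    (1 / 4) * ∫ y, h y ^ 2 ≤ ∫ y, deriv (fun y => y * h y) y ^ 2 := by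
  set h' := deriv h
  have hdiff : ∀ y, HasDerivAt h (h' y) y :=
    fun y => ((hh.differentiable one_ne_zero) y).hasDerivAt
  have hhc : Continuous h := hh.continuous
  have hh'c : Continuous h' := hh.continuous_deriv le_rfl
  have hint : ∀ g : ℝ → ℝ, Continuous g → (∀ y, h y = 0 → h' y = 0 → g y = 0) → Integrable g :=
    fun g hg hg0 => hg.integrable_of_hasCompactSupport <| hc.mono' <|
      Function.support_subset_iff'.2 fun y hy =>
        hg0 y (image_eq_zero_of_notMem_tsupport hy) (deriv_of_notMem_tsupport hy)
  set f' := fun y => h y + y * h' y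
  have hf' : ∀ y, deriv (fun y => y * h y) y = f' y := fun y => by
    simpa using ((hasDerivAt_id' y).fun_mul (hdiff y)).deriv
  have hu : ∀ y, HasDerivAt (fun y => y * h y ^ 2 / 2) (f' y * h y - h y ^ 2 / 2) y := fun y =>
    (((hasDerivAt_id' y).fun_mul ((hdiff y).fun_pow 2)).div_const 2).congr_deriv (by
      simp only [f']; ring)
  have hu'_int : Integrable fun y => f' y * h y - h y ^ 2 / 2 :=
    hint _ (by fun_prop) fun y h0 _ => by simp [h0]
  have hu_int : Integrable fun y => y * h y ^ 2 / 2 :=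
    hint _ (by fun_prop) fun y h0 _ => by simp [h0]
  have hh_int : Integrable fun y => h y ^ 2 := hint _ (by fun_prop) fun y h0 _ => by simp [h0]
  have hf'_int : Integrable fun y => f' y ^ 2 := hint _ (by fun_prop) fun y h0 h'0 => by
    simp [f', h0, h'0]
  calc (1 / 4) * ∫ y, h y ^ 2
      = (∫ y, (f' y * h y - h y ^ 2 / 2)) + ∫ y, (1 / 4) * h y ^ 2 := by
        rw [integral_eq_zero_of_hasDerivAt_of_integrable hu hu'_int hu_int, integral_const_mul,
          zero_add]
    _ = ∫ y, ((f' y * h y - h y ^ 2 / 2) + (1 / 4) * h y ^ 2) :=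
        (integral_add hu'_int (hh_int.const_mul _)).symm
    _ ≤ ∫ y, f' y ^ 2 :=
        integral_mono (hu'_int.add (hh_int.const_mul _)) hf'_int fun y => by
          nlinarith [sq_nonneg (f' y - h y / 2)]
    _ = ∫ y, deriv (fun y => y * h y) y ^ 2 := by simp only [hf']

theorem hardy_inequality {f : ℝ → ℝ} (hf : ContDiff ℝ 1 f) (hc : HasCompactSupport f)
    (h0 : (0 : ℝ) ∉ tsupport f) :
    (1 / 4) * ∫ y, f y ^ 2 / y ^ 2 ≤ ∫ y, deriv f y ^ 2 := by
  have hh : ContDiff ℝ 1 (fun y => f y / y) :=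
    hf.div_of_ne_zero_on_tsupport contDiff_id fun y hy hy0 => h0 (hy0 ▸ hy)
  have hhc : HasCompactSupport (fun y => f y / y) := hc.mono (by simp)
  have hfh : (fun y => y * (f y / y)) = f := funext fun y => by
    rcases eq_or_ne y 0 with rfl | hy
    · simp [image_eq_zero_of_notMem_tsupport h0]
    · field_simp
  simpa only [hfh, div_pow] using hardy_inequality_id_mul hh hhc

theorem HasCompactSupport.comp_prodMk_right {X Y M : Type*} [TopologicalSpace X]
    [TopologicalSpace Y] [R1Space Y] [Zero M] {F : X × Y → M} (hF : HasCompactSupport F) (x : X) :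
    HasCompactSupport (fun y => F (x, y)) :=
  .intro (hF.image continuous_snd) fun _ hy =>
    image_eq_zero_of_notMem_tsupport fun h => hy ⟨_, h, rfl⟩

section PartialDeriv

variable {E : Type*} [NormedAddCommGroup E] [NormedSpace ℝ E] {F : ℝ × ℝ → E} {p : ℝ × ℝ}

theorem DifferentiableAt.deriv_comp_prodMk_left (hF : DifferentiableAt ℝ F p) :
    deriv (fun x => F (x, p.2)) p.1 = fderiv ℝ F p (1, 0) :=
  (hF.hasFDerivAt.comp_hasDerivAt p.1 ((hasDerivAt_id p.1).prodMk (hasDerivAt_const p.1 p.2))).deriv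

theorem DifferentiableAt.deriv_comp_prodMk_right (hF : DifferentiableAt ℝ F p) :
    deriv (fun y => F (p.1, y)) p.2 = fderiv ℝ F p (0, 1) :=
  (hF.hasFDerivAt.comp_hasDerivAt p.2 ((hasDerivAt_const p.2 p.1).prodMk (hasDerivAt_id p.2))).deriv

end PartialDeriv

theorem ContDiff.integrable_fderiv_apply_sq {E : Type*} [NormedAddCommGroup E] [NormedSpace ℝ E]
    [MeasurableSpace E] [OpensMeasurableSpace E] {μ : Measure E} [IsFiniteMeasureOnCompacts μ]
    {F : E → ℝ} (hF : ContDiff ℝ 1 F) (hc : HasCompactSupport F) (v : E) :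
    Integrable (fun p => fderiv ℝ F p v ^ 2) μ :=
  (((hF.continuous_fderiv one_ne_zero).clm_apply continuous_const).memLp_of_hasCompactSupport
    (hc.fderiv_apply ℝ v)).integrable_sq

theorem Continuous.integrable_sq_div_snd_sq {F : ℝ × ℝ → ℝ} (hF : Continuous F)
    (hc : HasCompactSupport F) (h0 : ∀ p ∈ tsupport F, p.2 ≠ 0) :
    Integrable fun p => F p ^ 2 / p.2 ^ 2 := by
  have hdiv : Continuous fun p : ℝ × ℝ => F p / p.2 :=
    contDiff_zero.1 ((contDiff_zero.2 hF).div_of_ne_zero_on_tsupport contDiff_snd h0)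
  simpa only [div_pow] using (hdiv.memLp_of_hasCompactSupport (hc.mono (by simp))).integrable_sq

theorem hardy_inequality_comp_prodMk_right {F : ℝ × ℝ → ℝ} (hF : ContDiff ℝ 1 F)
    (hc : HasCompactSupport F) {x : ℝ} (hx : (x, 0) ∉ tsupport F) :
    (1 / 4) * ∫ y, F (x, y) ^ 2 / y ^ 2 ≤ ∫ y, deriv (fun y => F (x, y)) y ^ 2 :=
  hardy_inequality (hF.comp (contDiff_prodMk_right x)) (hc.comp_prodMk_right x)
    fun h0 => hx (tsupport_comp_subset_preimage F (Continuous.prodMk_right x) h0)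

/-- Spectral bound for the hyperbolic Laplacian `−y²Δ` on the upper half-plane
`M = {(x,y) : y > 0}` with invariant measure `dν = y⁻² dx dy`:
`(1/4) ∫_M |F|² dν ≤ ∫_M |DF|² dν = ∫_{y>0} |∇F|² dx dy`. -/
theorem hyperbolic_spectral_bound (F : ℝ × ℝ → ℝ)
    (hF : ContDiff ℝ 1 F) (hsupp : HasCompactSupport F)
    (hsub : tsupport F ⊆ {p : ℝ × ℝ | 0 < p.2}) :
    (1 / 4) * (∫ p in {p : ℝ × ℝ | 0 < p.2}, F p ^ 2 / p.2 ^ 2) ≤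
      ∫ p in {p : ℝ × ℝ | 0 < p.2},
        ((deriv (fun x : ℝ => F (x, p.2)) p.1) ^ 2
          + (deriv (fun y : ℝ => F (p.1, y)) p.2) ^ 2) := by
  have hFd : Differentiable ℝ F := hF.differentiable one_ne_zero
  have hF0 : ∀ p ∉ tsupport F, F p = 0 ∧ fderiv ℝ F p = 0 := fun p hp =>
    ⟨image_eq_zero_of_notMem_tsupport hp, fderiv_of_notMem_tsupport ℝ hp⟩
  have hS : ∀ G : ℝ × ℝ → ℝ, (∀ p ∉ tsupport F, G p = 0) →
      ∫ p in {p : ℝ × ℝ | 0 < p.2}, G p = ∫ p, G p := fun G hG =>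
    setIntegral_eq_integral_of_forall_compl_eq_zero fun p hp => hG p fun h => hp (hsub h)
  have hQ : Integrable fun p : ℝ × ℝ => F p ^ 2 / p.2 ^ 2 :=
    hF.continuous.integrable_sq_div_snd_sq hsupp fun p hp => (hsub hp).ne'
  have hDx : Integrable fun p : ℝ × ℝ => deriv (fun x => F (x, p.2)) p.1 ^ 2 := by
    simpa only [fun p => (hFd p).deriv_comp_prodMk_left]
      using hF.integrable_fderiv_apply_sq hsupp (1, 0)
  have hDy : Integrable fun p : ℝ × ℝ => deriv (fun y => F (p.1, y)) p.2 ^ 2 := by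
    simpa only [fun p => (hFd p).deriv_comp_prodMk_right]
      using hF.integrable_fderiv_apply_sq hsupp (0, 1)
  calc (1 / 4) * ∫ p in {p : ℝ × ℝ | 0 < p.2}, F p ^ 2 / p.2 ^ 2
      = ∫ x, (1 / 4) * ∫ y, F (x, y) ^ 2 / y ^ 2 := by
        rw [hS _ fun p hp => by simp [hF0 p hp], Measure.volume_eq_prod, integral_prod _ hQ,
          integral_const_mul]
    _ ≤ ∫ x, ∫ y, deriv (fun y => F (x, y)) y ^ 2 :=
        integral_mono (hQ.integral_prod_left.const_mul _) hDy.integral_prod_left fun _ =>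
          hardy_inequality_comp_prodMk_right hF hsupp fun hx => lt_irrefl (0 : ℝ) (hsub hx)
    _ = ∫ p : ℝ × ℝ, deriv (fun y => F (p.1, y)) p.2 ^ 2 := (integral_prod _ hDy).symm
    _ ≤ ∫ p : ℝ × ℝ, (deriv (fun x => F (x, p.2)) p.1 ^ 2 + deriv (fun y => F (p.1, y)) p.2 ^ 2) :=
        integral_mono hDy (hDx.add hDy) fun p => le_add_of_nonneg_left (sq_nonneg _)
    _ = _ := (hS _ fun p hp => by
        simp [(hFd p).deriv_comp_prodMk_left, (hFd p).deriv_comp_prodMk_right, hF0 p hp]).symm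
end

section
/- Let s > 0 and define F : [0,∞) → ℝ by F(u) = (1+u)^{−s}. Then F is the bounded monotonically decreasing solution of the Euler–Lagrange equation: for all u > 0, −(d/du)[ u(u+1) F'(u) ] + s(s−1) F(u) = s² (1+u)^{−(s+1)}; equivalently, with p = 2 + 1/s, F satisfies −(u(u+1)F')' + s(s−1)F = s² F^{p−1}. -/
open Real

/-! With `G(u) = u(u+1)F'(u) = -s u (1+u)^{-s}` one gets
`G'(u) = -s (1+u)^{-s-1} (1 + (1-s)u)`, and adding `s(s-1)F = s(s-1)(1+u)(1+u)^{-s-1}`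
leaves exactly `s² (1+u)^{-s-1}`. -/

lemma hasDerivAt_one_add_rpow (r : ℝ) {v : ℝ} (hv : -1 < v) :
    HasDerivAt (fun x : ℝ => (1 + x) ^ r) (r * (1 + v) ^ (r - 1)) v := by
  have hv' : (0 : ℝ) < 1 + v := by linarith
  simpa using ((hasDerivAt_id v).const_add 1).rpow_const (p := r) (Or.inl hv'.ne')

lemma mul_add_one_mul_deriv_one_add_rpow (r : ℝ) {v : ℝ} (hv : -1 < v) :
    v * (v + 1) * deriv (fun x : ℝ => (1 + x) ^ r) v = r * v * (1 + v) ^ r := by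
  have hv' : 1 + v ≠ 0 := by linarith
  rw [(hasDerivAt_one_add_rpow r hv).deriv, rpow_sub_one hv']
  field_simp
  ring

lemma hasDerivAt_mul_add_one_mul_deriv_one_add_rpow (r : ℝ) {u : ℝ} (hu : -1 < u) :
    HasDerivAt (fun v : ℝ => v * (v + 1) * deriv (fun x : ℝ => (1 + x) ^ r) v)
      (r * (1 + u) ^ (r - 1) * (1 + (r + 1) * u)) u := by
  have hu' : 1 + u ≠ 0 := by linarith
  have hG : HasDerivAt (fun v : ℝ => r * v * (1 + v) ^ r)
      (r * (1 + u) ^ r + r * u * (r * (1 + u) ^ (r - 1))) u := by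
    simpa using ((hasDerivAt_id' u).const_mul r).fun_mul (hasDerivAt_one_add_rpow r hu)
  have hflux : (fun v : ℝ => v * (v + 1) * deriv (fun x : ℝ => (1 + x) ^ r) v)
      =ᶠ[nhds u] fun v => r * v * (1 + v) ^ r := by
    filter_upwards [eventually_gt_nhds hu] with v hv
    exact mul_add_one_mul_deriv_one_add_rpow r hv
  refine (hG.congr_of_eventuallyEq hflux).congr_deriv ?_
  rw [rpow_sub_one hu']
  field_simp
  ring

theorem radial_equation_one_add_rpow_neg (s : ℝ) {u : ℝ} (hu : -1 < u) :
    -(deriv (fun v : ℝ => v * (v + 1) * deriv (fun x : ℝ => (1 + x) ^ (-s)) v) u)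
        + s * (s - 1) * (1 + u) ^ (-s) = s ^ 2 * (1 + u) ^ (-(s + 1)) := by
  have hu' : 1 + u ≠ 0 := by linarith
  rw [(hasDerivAt_mul_add_one_mul_deriv_one_add_rpow (-s) hu).deriv, ← sub_eq_neg_add,
    neg_add', rpow_sub_one hu']
  field_simp
  ring

lemma rpow_neg_rpow_two_add_inv_sub_one {s x : ℝ} (hs : s ≠ 0) (hx : 0 ≤ x) :
    (x ^ (-s)) ^ (2 + 1 / s - 1) = x ^ (-(s + 1)) := by
  rw [← rpow_mul hx]
  congr 1
  field_simp
  ring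

/-- `F(u) = (1+u)^{−s}` is the bounded, monotonically decreasing solution of the
radial Euler–Lagrange equation `−(u(u+1)F')' + s(s−1)F = s²(1+u)^{−(s+1)}`
on `(0,∞)`; equivalently, with `p = 2 + 1/s`, the right-hand side is
`s² F^{p−1}`. -/
theorem euler_lagrange_radial_solution (s p : ℝ) (hs : 0 < s) (hp : p = 2 + 1 / s)
    (F : ℝ → ℝ) (hF : ∀ u : ℝ, F u = (1 + u) ^ (-s)) :
    (∃ B : ℝ, ∀ u ∈ Set.Ici (0 : ℝ), |F u| ≤ B) ∧
    AntitoneOn F (Set.Ici (0 : ℝ)) ∧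
    ∀ u : ℝ, 0 < u →
      (-(deriv (fun v : ℝ => v * (v + 1) * deriv F v) u) + s * (s - 1) * F u
          = s ^ 2 * (1 + u) ^ (-(s + 1))) ∧
      s ^ 2 * (1 + u) ^ (-(s + 1)) = s ^ 2 * F u ^ (p - 1) := by
  obtain rfl : F = fun u => (1 + u) ^ (-s) := funext hF
  refine ⟨⟨1, fun u hu => ?_⟩, fun a ha b hb hab => ?_, fun u hu =>
    ⟨radial_equation_one_add_rpow_neg s (by linarith), ?_⟩⟩
  · rw [Set.mem_Ici] at hu
    rw [abs_of_nonneg (rpow_nonneg (by linarith) _)]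
    exact rpow_le_one_of_one_le_of_nonpos (by linarith) (by linarith)
  · rw [Set.mem_Ici] at ha hb
    exact rpow_le_rpow_of_nonpos (by linarith) (by linarith) (by linarith)
  · rw [hp, rpow_neg_rpow_two_add_inv_sub_one hs.ne' (by linarith)]
end
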